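/- Schur-type identity: for every W₀-invariant function t : R₀ → ℂ (i.e. t_{wα} = t_α for all w ∈ W₀, α ∈ R₀) and every root β ∈ R₀, one has ∑_{α∈R₀⁺} t_α ⟨β,α^∨⟩⟨α,β^∨⟩ = (2/n) ∑_{α∈R₀} t_α. -/

import Mathlib

noncomputable section

open scoped RealInnerProductSpace BigOperators Classical
open Filter

namespace AffinePieri

variable {V : Type*} [NormedAddCommGroup V] [InnerProductSpace ℝ V] [FiniteDimensional ℝ V]

/-- The coroot `α^∨ = 2α/⟨α,α⟩` of a vector `α`. -/
def coroot (α : V) : V := (2 / ⟪α, α⟫) • α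

lemma refl_involutive (α : V) (k : ℝ) :
    Function.Involutive (fun x : V => x - (⟪x, coroot α⟫ + k) • α) := by
  intro x
  by_cases h : α = 0
  · simp [h, coroot]
  · have hαα : ⟪α, α⟫ ≠ 0 := fun hc => h (inner_self_eq_zero.mp hc)
    have h2 : ⟪α, coroot α⟫ = 2 := by
      rw [coroot, real_inner_smul_right]
      field_simp
    show (x - (⟪x, coroot α⟫ + k) • α) -
        (⟪x - (⟪x, coroot α⟫ + k) • α, coroot α⟫ + k) • α = x
    rw [inner_sub_left, real_inner_smul_left, h2]
    have key : (⟪x, coroot α⟫ + k) +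
        (⟪x, coroot α⟫ - (⟪x, coroot α⟫ + k) * 2 + k) = 0 := by ring
    rw [sub_sub, ← add_smul, key, zero_smul, sub_zero]

/-- The (affine) orthogonal reflection `x ↦ x - (⟨x,α^∨⟩ + k)α` as a permutation of `V`. -/
def reflP (α : V) (k : ℝ) : Equiv.Perm V :=
  Function.Involutive.toPerm _ (refl_involutive α k)

@[simp] lemma reflP_apply (α : V) (k : ℝ) (x : V) :
    reflP α k x = x - (⟪x, coroot α⟫ + k) • α := rfl

/-- The sign of a real number, as an integer. -/
def zsgn (v : ℝ) : ℤ := if 0 < v then 1 else if v < 0 then -1 else 0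

/-- Alternating composition `f ∘ g ∘ f ∘ ⋯` with `m` factors, used for braid relations. -/
def altOp {A : Type*} (f g : A → A) : ℕ → A → A
  | 0 => id
  | (k + 1) => f ∘ altOp g f k

/-- The interaction potential `v_α` entering the Morse (fusion) potential, for a
parameter family `s`. -/
def vintOf (s : V → ℝ) (α : V) (x : ℝ) : ℝ :=
  (1 - s α ^ 2) * ∫ y in (0:ℝ)..x, 1 / (1 - 2 * s α * Real.cos y + s α ^ 2)

/-- All the standing data of the paper: an irreducible reduced crystallographic root
system `R₀` spanning the Euclidean space `V`, with a positive system, simple roots,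
highest (short) roots, an admissible pair `(R₀, R̂₀)` encoded by the map `hat` and the
affine root `α₀`, a `W₀`-invariant multiplicity function `t` with values in `(-1,1)`,
and an integral level `c > 1`. -/
structure Setup (V : Type*) [NormedAddCommGroup V] [InnerProductSpace ℝ V]
    [FiniteDimensional ℝ V] where
  n : ℕ
  npos : 0 < n
  hdim : Module.finrank ℝ V = n
  R0 : Finset V
  zero_not_mem : (0 : V) ∉ R0
  span_top : Submodule.span ℝ (R0 : Set V) = ⊤
  cryst : ∀ α ∈ R0, ∀ β ∈ R0, ∃ k : ℤ, ⟪β, coroot α⟫ = (k : ℝ)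
  refl_mem : ∀ α ∈ R0, ∀ β ∈ R0, β - ⟪β, coroot α⟫ • α ∈ R0
  reduced : ∀ α ∈ R0, ∀ r : ℝ, r • α ∈ R0 → r = 1 ∨ r = -1
  irred : ¬ ∃ A B : Set V, A.Nonempty ∧ B.Nonempty ∧ A ∪ B = (R0 : Set V) ∧
      ∀ α ∈ A, ∀ β ∈ B, ⟪α, β⟫ = 0
  Rpos : Finset V
  pos_subset : Rpos ⊆ R0
  pos_partition : ∀ α ∈ R0, (α ∈ Rpos ↔ -α ∉ Rpos)
  simple : Fin n → V
  simple_mem : ∀ j, simple j ∈ Rpos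
  pos_decomp : ∀ α ∈ Rpos, ∃ f : Fin n → ℕ, α = ∑ j, (f j : ℝ) • simple j
  hroot : V
  hroot_mem : hroot ∈ Rpos
  hroot_highest : ∀ β ∈ R0, ∃ f : Fin n → ℕ, hroot - β = ∑ j, (f j : ℝ) • simple j
  hs : V
  hs_mem : hs ∈ Rpos
  hs_short : ∀ α ∈ R0, ⟪hs, hs⟫ ≤ ⟪α, α⟫
  hs_highest : ∀ β ∈ R0, ⟪β, β⟫ = ⟪hs, hs⟫ →
      ∃ f : Fin n → ℕ, hs - β = ∑ j, (f j : ℝ) • simple j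
  hat : V → V
  a0 : V
  admissible : ((∀ α : V, hat α = coroot α) ∧ a0 = -hs) ∨
      ((∀ α : V, hat α = (2 / ⟪hroot, hroot⟫) • α) ∧ a0 = -hroot)
  t : V → ℝ
  t_bound : ∀ α ∈ R0, |t α| < 1
  t_invariant : ∀ α ∈ R0, ∀ β ∈ R0, t (β - ⟪β, coroot α⟫ • α) = t β
  c : ℤ
  c_gt : 1 < c

namespace Setup

variable (S : Setup V)

/-- `m_α = 2/⟨α, α̂⟩`. -/
def m (α : V) : ℝ := 2 / ⟪α, S.hat α⟫

/-- The finite Weyl group `W₀`, generated by the reflections in the roots. -/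
def W0 : Subgroup (Equiv.Perm V) :=
  Subgroup.closure {w | ∃ α ∈ S.R0, w = reflP α 0}

/-- The affine Weyl group `W`, generated by the affine reflections
`s_a` for `a = α^∨ + m_α r c`. -/
def W : Subgroup (Equiv.Perm V) :=
  Subgroup.closure {w | ∃ α ∈ S.R0, ∃ r : ℤ, w = reflP α (S.m α * (r : ℝ) * (S.c : ℝ))}

/-- The `W₀`-orbit of a vector. -/
def orb (ω : V) : Set V := {x | ∃ w ∈ S.W0, w ω = x}

/-- The weight lattice `P` of `R₀`. -/
def Plat : Set V := {x | ∀ α ∈ S.R0, ∃ k : ℤ, ⟪x, coroot α⟫ = (k : ℝ)}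

/-- The root lattice `Q` of `R₀`. -/
def Qlat : Set V := (AddSubgroup.closure (S.R0 : Set V) : Set V)

/-- The semigroup `Q⁺` generated by the positive roots. -/
def Qplus : Set V := (AddSubmonoid.closure (S.Rpos : Set V) : Set V)

/-- The cone `P⁺` of dominant weights. -/
def Pplus : Set V := {x | x ∈ S.Plat ∧ ∀ α ∈ S.Rpos, 0 ≤ ⟪x, coroot α⟫}

/-- The dominant affine alcove `A_c = {x | 0 ≤ ⟨x,β⟩ ≤ c ∀ β ∈ R̂₀⁺}`. -/
def Alc : Set V := {x | ∀ α ∈ S.Rpos, 0 ≤ ⟪x, S.hat α⟫ ∧ ⟪x, S.hat α⟫ ≤ (S.c : ℝ)}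

/-- `P_c = P ∩ A_c`. -/
def Pc : Set V := {x | x ∈ S.Plat ∧ x ∈ S.Alc}

/-- The weight lattice `P̂` of `R̂₀`. -/
def Phat : Set V := {x | ∀ α ∈ S.R0, ∃ k : ℤ, ⟪x, coroot (S.hat α)⟫ = (k : ℝ)}

/-- `P̂_c = {μ ∈ P̂ | 0 ≤ ⟨μ,α⟩ ≤ c ∀ α ∈ R₀⁺}`. -/
def Phatc : Set V :=
  {x | x ∈ S.Phat ∧ ∀ α ∈ S.Rpos, 0 ≤ ⟪x, α⟫ ∧ ⟪x, α⟫ ≤ (S.c : ℝ)}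

/-- The half sum `ρ` of the positive roots of `R₀`. -/
def rho : V := (2⁻¹ : ℝ) • ∑ α ∈ S.Rpos, α

/-- The half sum `ρ̂` of the positive roots of `R̂₀`. -/
def rhoHat : V := (2⁻¹ : ℝ) • ∑ α ∈ S.Rpos, S.hat α

/-- The coroot lattice `Q̂^∨` of `R̂₀`. -/
def Qhatvee : Set V :=
  (AddSubgroup.closure ((fun α => coroot (S.hat α)) '' (S.R0 : Set V)) : Set V)

/-- The gradient (direction) of the affine simple root `a_j`:
`α₀` for `j = 0` and `α_j` otherwise. -/
def alpha (j : Fin (S.n + 1)) : V :=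
  if h : (j : ℕ) = 0 then S.a0 else S.simple ⟨(j : ℕ) - 1, by have := j.isLt; omega⟩

/-- The constant term of the affine simple root `a_j`. -/
def kconst (j : Fin (S.n + 1)) : ℝ := if (j : ℕ) = 0 then (S.c : ℝ) else 0

/-- The affine simple root `a_j` as an affine function on `V`. -/
def aFun (j : Fin (S.n + 1)) (x : V) : ℝ := ⟪x, coroot (S.alpha j)⟫ + S.kconst j

/-- The simple affine reflections `s_0, s_1, …, s_n`. -/
def sgen (j : Fin (S.n + 1)) : Equiv.Perm V := reflP (S.alpha j) (S.kconst j)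

/-- The length of an element of the affine Weyl group: the minimal length of an
expression as a product of the simple reflections. -/
def len (w : Equiv.Perm V) : ℕ :=
  sInf {k | ∃ l : List (Fin (S.n + 1)), l.length = k ∧ (l.map S.sgen).prod = w}

/-- The length of an element of the finite Weyl group w.r.t. the simple reflections. -/
def len0 (w : Equiv.Perm V) : ℕ :=
  sInf {k | ∃ l : List (Fin S.n), l.length = k ∧
    (l.map fun j => reflP (S.simple j) 0).prod = w}

/-- `l` is a reduced expression for `w`. -/
def IsReducedWord (l : List (Fin (S.n + 1))) (w : Equiv.Perm V) : Prop :=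
  (l.map S.sgen).prod = w ∧ l.length = S.len w

/-- The Bruhat partial order on the affine Weyl group. -/
def BruhatLE (v w : Equiv.Perm V) : Prop :=
  ∃ l : List (Fin (S.n + 1)), S.IsReducedWord l w ∧
    ∃ l' : List (Fin (S.n + 1)), l'.Sublist l ∧ (l'.map S.sgen).prod = v

/-- Evaluation of a function on the weight lattice at a point of `V` (by `0` off `P`). -/
def ev (f : ↥S.Plat → ℂ) (x : V) : ℂ := if h : x ∈ S.Plat then f ⟨x, h⟩ else 0

/-- The integral part `J_j` of the integral-reflection operators. -/
def Jop (j : Fin (S.n + 1)) (f : ↥S.Plat → ℂ) (x : ↥S.Plat) : ℂ :=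
  if 0 < Int.floor (S.aFun j x.1) then
    -∑ k ∈ Finset.Icc (1 : ℤ) (Int.floor (S.aFun j x.1)),
      S.ev f (x.1 - (k : ℝ) • S.alpha j)
  else if Int.floor (S.aFun j x.1) < 0 then
    ∑ k ∈ Finset.Icc (0 : ℤ) (-(Int.floor (S.aFun j x.1)) - 1),
      S.ev f (x.1 + (k : ℝ) • S.alpha j)
  else 0

/-- The integral-reflection operators `T_j = t_j s_j + (t_j - 1) J_j` on `𝒞(P)`. -/
def Top (j : Fin (S.n + 1)) (f : ↥S.Plat → ℂ) (x : ↥S.Plat) : ℂ :=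
  (S.t (S.alpha j) : ℂ) * S.ev f ((S.sgen j)⁻¹ x.1) +
    ((S.t (S.alpha j) : ℂ) - 1) * S.Jop j f x

/-- The operator `T_{j₁} ∘ ⋯ ∘ T_{j_ℓ}` attached to a word `l = [j₁, …, j_ℓ]`. -/
def wordOp (l : List (Fin (S.n + 1))) : (↥S.Plat → ℂ) → (↥S.Plat → ℂ) :=
  l.foldr (fun j g => S.Top j ∘ g) id

/-- `TW` realizes `w ↦ T_w` (via reduced expressions). -/
def IsTW (TW : Equiv.Perm V → (↥S.Plat → ℂ) → (↥S.Plat → ℂ)) : Prop :=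
  ∀ w l, S.IsReducedWord l w → TW w = S.wordOp l

/-- `tw` realizes the length multiplicative function `w ↦ t_w` (via reduced expressions). -/
def IsTmult (tw : Equiv.Perm V → ℂ) : Prop :=
  ∀ w l, S.IsReducedWord l w → tw w = (l.map fun j => (S.t (S.alpha j) : ℂ)).prod

/-- `wmin` realizes `x ↦ w_x`, the unique shortest affine Weyl group element moving `x`
into the dominant alcove. -/
def IsShortest (wmin : V → Equiv.Perm V) : Prop :=
  ∀ x : V, wmin x ∈ S.W ∧ wmin x x ∈ S.Alc ∧
    ∀ w ∈ S.W, w x ∈ S.Alc →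
      S.len (wmin x) ≤ S.len w ∧ (S.len w = S.len (wmin x) → w = wmin x)

/-- The positive affine roots, encoded as pairs `(α, r)` representing `α^∨ + m_α r c`. -/
def RplusP : Set (V × ℤ) :=
  {p | p.1 ∈ S.R0 ∧ (1 ≤ p.2 ∨ (p.2 = 0 ∧ p.1 ∈ S.Rpos))}

/-- The value of the affine root encoded by `p = (α, r)` at a point of `V`. -/
def affval (p : V × ℤ) (x : V) : ℝ :=
  ⟪x, coroot p.1⟫ + S.m p.1 * (p.2 : ℝ) * (S.c : ℝ)

/-- `R[λ] = {a ∈ R⁺ | a(λ) < 0}`. -/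
def Raff (lam : V) : Set (V × ℤ) := {p | p ∈ S.RplusP ∧ S.affval p lam < 0}

/-- `t[λ] = ∏_{a ∈ R[λ]} t_{a'}`. -/
def tBr (lam : V) : ℂ := ∏ᶠ p ∈ S.Raff lam, (S.t p.1 : ℂ)

/-- `θ(λ) = |{a ∈ R⁺ | a(λ) = -2}|`. -/
def thetaCt (lam : V) : ℕ :=
  Set.ncard {p : V × ℤ | p ∈ S.RplusP ∧ S.affval p lam = -2}

/-- The affine intertwining operator `𝒥`, defined via `wmin` and `TW`. -/
def JJ (wmin : V → Equiv.Perm V) (TW : Equiv.Perm V → (↥S.Plat → ℂ) → (↥S.Plat → ℂ))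
    (f : ↥S.Plat → ℂ) (x : ↥S.Plat) : ℂ :=
  (S.tBr x.1)⁻¹ * S.ev (TW (wmin x.1) f) (wmin x.1 x.1)

/-- The Morse (fusion-potential) function `𝒱_μ` for a parameter family `s`. -/
def MorseOf (s : V → ℝ) (μ ξ : V) : ℝ :=
  ((S.c : ℝ) / 2) * ⟪ξ, ξ⟫ - 2 * Real.pi * ⟪S.rhoHat + μ, ξ⟫ +
    ∑ α ∈ S.Rpos, (2 / ⟪α, coroot (S.hat α)⟫) * ∫ x in (0:ℝ)..(⟪ξ, α⟫), vintOf s α x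

/-- The Morse function `𝒱_μ` for the multiplicity function of the setup. -/
def Morse (μ ξ : V) : ℝ := S.MorseOf S.t μ ξ

/-- The critical equation `cξ + ∑_{α∈R₀⁺} v_α(⟨ξ,α⟩) α̂ = 2π(ρ̂ + μ)`. -/
def CritEq (μ x : V) : Prop :=
  (S.c : ℝ) • x + ∑ α ∈ S.Rpos, (vintOf S.t α ⟪x, α⟫) • S.hat α =
    (2 * Real.pi) • (S.rhoHat + μ)

/-- Extension of a parameter vector indexed by `R₀` to a function on `V` (by zero). -/
def extParam (s : ↥S.R0 → ℝ) : V → ℝ := fun α => if h : α ∈ S.R0 then s ⟨α, h⟩ else 0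

/-- `xi` realizes `μ ↦ ξ_μ`, the unique global minimizer of `𝒱_μ`. -/
def IsMinimizer (xi : V → V) : Prop :=
  ∀ μ ∈ S.Phat, ∀ x : V, x ≠ xi μ → S.Morse μ (xi μ) < S.Morse μ x

/-- The `c`-function of the Macdonald spherical function. -/
def Cfun (ξ : V) : ℂ :=
  ∏ α ∈ S.Rpos, (1 - (S.t α : ℂ) * Complex.exp (-(Complex.I * (⟪ξ, α⟫ : ℂ)))) /
      (1 - Complex.exp (-(Complex.I * (⟪ξ, α⟫ : ℂ))))

/-- The Macdonald spherical function `M_λ(ξ)`. -/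
def Msph (lam ξ : V) : ℂ :=
  ∑ᶠ w ∈ (S.W0 : Set (Equiv.Perm V)),
    S.Cfun (w ξ) * Complex.exp (Complex.I * (⟪w ξ, lam⟫ : ℂ))

/-- The orbit sum `m_ω(e^{iξ})`. -/
def mSym (ω ξ : V) : ℂ := ∑ᶠ ν ∈ S.orb ω, Complex.exp (Complex.I * (⟪ν, ξ⟫ : ℂ))

/-- The plane wave `e^{iξ} ∈ 𝒞(P)`. -/
def planewave (ξ : V) : ↥S.Plat → ℂ :=
  fun lam => Complex.exp (Complex.I * (⟪lam.1, ξ⟫ : ℂ))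

/-- The free operator `L_{ω;1}`. -/
def Lfree (ω : V) (f : ↥S.Plat → ℂ) (x : ↥S.Plat) : ℂ :=
  ∑ᶠ ν ∈ S.orb ω, S.ev f (x.1 + ν)

/-- `φ_ξ = ∑_{v ∈ W₀} T_v e^{iξ}`. -/
def phiW (TW : Equiv.Perm V → (↥S.Plat → ℂ) → (↥S.Plat → ℂ)) (ξ : V) : ↥S.Plat → ℂ :=
  ∑ᶠ w ∈ (S.W0 : Set (Equiv.Perm V)), TW w (S.planewave ξ)

/-- The affine Macdonald spherical function `Φ_ξ = 𝒥 φ_ξ`. -/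
def PhiA (wmin : V → Equiv.Perm V)
    (TW : Equiv.Perm V → (↥S.Plat → ℂ) → (↥S.Plat → ℂ)) (ξ : V) : ↥S.Plat → ℂ :=
  S.JJ wmin TW (S.phiW TW ξ)

/-- Invariance of a lattice function under the affine Weyl group. -/
def Winv (f : ↥S.Plat → ℂ) : Prop :=
  ∀ w ∈ S.W, ∀ x : ↥S.Plat, S.ev f (w⁻¹ x.1) = f x

/-- A minuscule dominant weight. -/
def Minuscule (ω : V) : Prop := ω ∈ S.Pplus ∧ ∀ α ∈ S.Rpos, ⟪ω, coroot α⟫ ≤ 1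

/-- `P_ϑ^⋆`: the orbit of the minuscule and quasi-minuscule weights. -/
def Pstar : Set V :=
  {x | ∃ w ∈ S.W0, ∃ η : V, (S.Minuscule η ∨ η = S.hs) ∧ x = w η}

/-- `ê_t(η) = ∏_{β∈R̂₀⁺} t_β^{⟨η,β^∨⟩/2}`. -/
def et (η : V) : ℂ :=
  ∏ α ∈ S.Rpos, (S.t α : ℂ) ^ (((⟪η, coroot (S.hat α)⟫ / 2 : ℝ) : ℂ))

/-- `ĥ_t = t_{α₀} ê_t(-α₀^∨)`. -/
def hhat : ℂ := (S.t S.a0 : ℂ) * S.et (-(coroot S.a0))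

/-- `e_t(ν) = ∏_{α∈R₀⁺} t_α^{⟨ν,α^∨⟩/2}`. -/
def elit (ν : V) : ℂ :=
  ∏ α ∈ S.Rpos, (S.t α : ℂ) ^ (((⟪ν, coroot α⟫ / 2 : ℝ) : ℂ))

/-- `h_t = t_ϑ e_t(-α₀)`. -/
def hlit : ℂ := (S.t S.hs : ℂ) * S.elit (-S.a0)

/-- The coefficients `d_{λ,ν}`. -/
def dcoef (lam ν : V) : ℂ :=
  if ν ∈ S.orb S.hs then
    (S.thetaCt (lam + ν) : ℂ) * S.elit (-ν) * S.hlit ^ zsgn ⟪lam, S.hat ν⟫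
  else 0

/-- The Pieri coefficients `V_{λ,ν}(t)`. -/
def Vcoef (lam ν : V) : ℂ :=
  (∏ α ∈ S.Rpos, if ⟪lam, S.hat α⟫ = 0 ∧ 0 < ⟪ν, S.hat α⟫ then
      (1 - (S.t α : ℂ) * S.et (S.hat α)) / (1 - S.et (S.hat α)) else 1) *
  ∏ α ∈ S.Rpos, if ⟪lam, S.hat α⟫ = (S.c : ℝ) ∧ ⟪ν, S.hat α⟫ < 0 then
      (1 - (S.t α : ℂ) * S.hhat * S.et (-(S.hat α))) / (1 - S.hhat * S.et (-(S.hat α)))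
    else 1

/-- The Pieri coefficients `U_{λ,ω}(t)`. -/
def Ucoef (wmin : V → Equiv.Perm V) (lam ω : V) : ℂ :=
  (∑ᶠ ν ∈ {ν | ν ∈ S.orb ω ∧ wmin (lam + ν) (lam + ν) = lam}, S.tBr (lam + ν)) +
    (1 - (S.t S.hs : ℂ)⁻¹) *
      ∑ᶠ ν ∈ {ν | ν ∈ S.orb ω ∧ wmin (lam + ν) lam = lam}, S.dcoef lam ν

/-- The linear part of an affine transformation of `V`. -/
def linp (w : Equiv.Perm V) (x : V) : V := w x - w (0 : V)

/-- The set `[x] = {y | y₊ = x₊, w_y ≤ w_x}`. -/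
def bra (wmin : V → Equiv.Perm V) (x : V) : Set V :=
  {y | wmin y y = wmin x x ∧ S.BruhatLE (wmin y) (wmin x)}

/-- The partial order `μ ⪯ λ`. -/
def preceq (wmin : V → Equiv.Perm V) (μ lam : V) : Prop :=
  lam - μ ∈ S.Qlat ∧ convexHull ℝ (S.bra wmin μ) ⊆ convexHull ℝ (S.bra wmin lam)

/-- The Weyl denominator `δ(ξ)`. -/
def weylDenom (ξ : V) : ℂ :=
  ∏ α ∈ S.Rpos, (Complex.exp (Complex.I * (⟪ξ, α⟫ : ℂ) / 2) -
      Complex.exp (-(Complex.I * (⟪ξ, α⟫ : ℂ) / 2)))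

/-- The Weyl character `χ_λ(ξ)`. -/
def chiW (lam ξ : V) : ℂ :=
  (S.weylDenom ξ)⁻¹ * ∑ᶠ w ∈ (S.W0 : Set (Equiv.Perm V)),
    ((-1 : ℂ) ^ S.len0 w) * Complex.exp (Complex.I * (⟪w ξ, lam + S.rho⟫ : ℂ))

/-- The counting function `N_{λ,ω}`. -/
def Ncount (lam ω : V) : ℕ :=
  Nat.card {j : Fin (S.n + 1) // S.aFun j lam = 0 ∧ S.alpha j ∈ S.orb ω}

end Setup


lemma coroot_inner_self' {α : V} (h : ⟪α, α⟫ ≠ 0) : ⟪α, coroot α⟫ = 2 := by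
  rw [coroot, real_inner_smul_right]; field_simp

lemma coroot_neg' (α : V) : coroot (-α) = -coroot α := by
  simp [coroot, inner_neg_neg]

lemma refl_inner' {γ : V} (h : ⟪γ, γ⟫ ≠ 0) (u v : V) :
    ⟪reflP γ 0 u, reflP γ 0 v⟫ = ⟪u, v⟫ := by
  simp only [reflP_apply, add_zero, coroot, real_inner_smul_right, inner_sub_left,
    inner_sub_right, real_inner_smul_left, real_inner_smul_right]
  rw [real_inner_comm γ u, real_inner_comm γ v]
  field_simp
  ring

lemma reflP_reflP' (γ : V) (k : ℝ) (x : V) : reflP γ k (reflP γ k x) = x :=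
  refl_involutive γ k x

lemma refl_self_neg' {γ : V} (h : ⟪γ, γ⟫ ≠ 0) : reflP γ 0 γ = -γ := by
  rw [reflP_apply, coroot_inner_self' h, add_zero, two_smul]
  abel

/-- Schur-type identity: for every `W₀`-invariant `t : R₀ → ℂ` and every
root `β ∈ R₀`, `∑_{α∈R₀⁺} t_α ⟨β,α^∨⟩⟨α,β^∨⟩ = (2/n) ∑_{α∈R₀} t_α`. -/
theorem statement18 (S : Setup V) (tc : V → ℂ)
    (hinv : ∀ w ∈ S.W0, ∀ α ∈ S.R0, tc (w α) = tc α) (β : V) (hβ : β ∈ S.R0) :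
    ∑ α ∈ S.Rpos, tc α * ((⟪β, coroot α⟫ : ℝ) : ℂ) * ((⟪α, coroot β⟫ : ℝ) : ℂ)
      = (2 / (S.n : ℂ)) * ∑ α ∈ S.R0, tc α := by
  classical
  -- basic nondegeneracy
  have hne : ∀ {α : V}, α ∈ S.R0 → ⟪α, α⟫ ≠ 0 := by
    intro α hα hc
    exact S.zero_not_mem (inner_self_eq_zero.mp hc ▸ hα)
  -- reflections are in W₀
  have hW0 : ∀ γ ∈ S.R0, reflP γ 0 ∈ S.W0 := fun γ hγ =>
    Subgroup.subset_closure ⟨γ, hγ, rfl⟩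
  -- reflections map R₀ to R₀
  have hmap : ∀ γ ∈ S.R0, ∀ α ∈ S.R0, reflP γ 0 α ∈ S.R0 := by
    intro γ hγ α hα
    have := S.refl_mem γ hγ α hα
    simpa [reflP_apply, add_zero] using this
  -- tc is reflection invariant
  have htc : ∀ γ ∈ S.R0, ∀ α ∈ S.R0, tc (reflP γ 0 α) = tc α := fun γ hγ α hα =>
    hinv _ (hW0 γ hγ) α hα
  have htcneg : ∀ α ∈ S.R0, tc (-α) = tc α := by
    intro α hα
    have := htc α hα α hα
    rwa [refl_self_neg' (hne hα)] at this
  have hnegmem : ∀ α ∈ S.R0, -α ∈ S.R0 := by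
    intro α hα
    have := hmap α hα α hα
    rwa [refl_self_neg' (hne hα)] at this
  -- the bilinear form G
  set G : V → V → ℂ := fun x y =>
    ∑ α ∈ S.R0, tc α * ((⟪x, coroot α⟫ : ℝ) : ℂ) * ((⟪α, y⟫ : ℝ) : ℂ) with hGdef
  -- coroot equivariance (on the level of inner products)
  have hcor : ∀ γ ∈ S.R0, ∀ x α : V,
      ⟪reflP γ 0 x, coroot (reflP γ 0 α)⟫ = ⟪x, coroot α⟫ := by
    intro γ hγ x α
    rw [coroot, coroot, real_inner_smul_right, real_inner_smul_right,
      refl_inner' (hne hγ) α α, refl_inner' (hne hγ) x α]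
  -- invariance of G under reflections
  have hGinv : ∀ γ ∈ S.R0, ∀ x y : V, G (reflP γ 0 x) (reflP γ 0 y) = G x y := by
    intro γ hγ x y
    refine (Finset.sum_equiv (reflP γ 0) ?_ ?_).symm
    · intro α
      constructor
      · intro hα; exact hmap γ hγ α hα
      · intro hα
        have := hmap γ hγ _ hα
        rwa [reflP_reflP' γ 0 α] at this
    · intro α hα
      rw [htc γ hγ α hα, hcor γ hγ x α, refl_inner' (hne hγ) α y]
  -- linearity of G in each variable
  have hGsub : ∀ x y z : V, ∀ c : ℝ, G x (y - c • z) = G x y - (c : ℂ) * G x z := by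
    intro x y z c
    simp only [hGdef, inner_sub_right, real_inner_smul_right, Finset.mul_sum,
      ← Finset.sum_sub_distrib]
    refine Finset.sum_congr rfl fun α _ => ?_
    push_cast
    ring
  have hGnegl : ∀ x y : V, G (-x) y = -G x y := by
    intro x y
    simp only [hGdef, inner_neg_left, ← Finset.sum_neg_distrib]
    refine Finset.sum_congr rfl fun α _ => ?_
    push_cast
    ring
  -- symmetry of G
  have hGsymm : ∀ x y : V, G x y = G y x := by
    intro x y
    refine Finset.sum_congr rfl fun α _ => ?_
    rw [coroot, real_inner_smul_right, real_inner_smul_right,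
      real_inner_comm α y, real_inner_comm x α]
    push_cast
    ring
  -- every root is an "eigenvector"
  set lam : V → ℂ := fun γ => G γ γ / ((⟪γ, γ⟫ : ℝ) : ℂ) with hlamdef
  have heig : ∀ γ ∈ S.R0, ∀ y : V, G γ y = ((⟪γ, y⟫ : ℝ) : ℂ) * lam γ := by
    intro γ hγ y
    have h1 : G γ y = G (reflP γ 0 γ) (reflP γ 0 y) := (hGinv γ hγ γ y).symm
    rw [refl_self_neg' (hne hγ), hGnegl] at h1
    have h2 : reflP γ 0 y = y - ⟪y, coroot γ⟫ • γ := by rw [reflP_apply, add_zero]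
    rw [h2, hGsub] at h1
    have h3 : (2 : ℂ) * G γ y = ((⟪y, coroot γ⟫ : ℝ) : ℂ) * G γ γ := by
      have := h1
      ring_nf at this ⊢
      linear_combination this
    have h4 : ⟪y, coroot γ⟫ = 2 * ⟪γ, y⟫ / ⟪γ, γ⟫ := by
      rw [coroot, real_inner_smul_right, real_inner_comm y γ]
      ring
    have hgg : ((⟪γ, γ⟫ : ℝ) : ℂ) ≠ 0 := by
      exact_mod_cast Complex.ofReal_ne_zero.mpr (hne hγ)
    rw [h4] at h3
    rw [hlamdef]
    field_simp at h3 ⊢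
    push_cast at h3
    rw [div_mul_eq_mul_div, eq_div_iff hgg] at h3
    linear_combination h3 / 2
  -- lam is constant on R₀ by irreducibility
  have hlamconst : ∀ γ ∈ S.R0, lam γ = lam β := by
    by_contra hcon
    push_neg at hcon
    obtain ⟨γ, hγ, hγne⟩ := hcon
    refine S.irred ⟨{α : V | α ∈ S.R0 ∧ lam α = lam β},
      {α : V | α ∈ S.R0 ∧ lam α ≠ lam β}, ⟨β, hβ, rfl⟩, ⟨γ, hγ, hγne⟩, ?_, ?_⟩
    · ext α
      simp only [Set.mem_union, Set.mem_setOf_eq, Finset.coe_sort_coe, Finset.mem_coe]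
      constructor
      · rintro (⟨h, _⟩ | ⟨h, _⟩) <;> exact h
      · intro h
        by_cases hc : lam α = lam β
        · exact Or.inl ⟨h, hc⟩
        · exact Or.inr ⟨h, hc⟩
    · rintro a ⟨ha, hla⟩ b ⟨hb, hlb⟩
      by_contra hab
      have e1 : G a b = ((⟪a, b⟫ : ℝ) : ℂ) * lam a := heig a ha b
      have e2 : G b a = ((⟪b, a⟫ : ℝ) : ℂ) * lam b := heig b hb a
      have e3 : ⟪b, a⟫ = ⟪a, b⟫ := real_inner_comm a b
      have h1 : ((⟪a, b⟫ : ℝ) : ℂ) * lam a = ((⟪a, b⟫ : ℝ) : ℂ) * lam b := by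
        rw [← e1, hGsymm a b, e2, e3]
      have hab' : ((⟪a, b⟫ : ℝ) : ℂ) ≠ 0 := Complex.ofReal_ne_zero.mpr hab
      have : lam a = lam b := mul_left_cancel₀ hab' h1
      exact hlb (this ▸ hla)
  set L : ℂ := lam β with hLdef
  -- G x y = ⟪x,y⟫ L for all x, y
  have hGall : ∀ x y : V, G x y = ((⟪x, y⟫ : ℝ) : ℂ) * L := by
    intro x y
    have hx : x ∈ Submodule.span ℝ (S.R0 : Set V) := S.span_top ▸ Submodule.mem_top
    induction hx using Submodule.span_induction with
    | mem z hz =>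
      rw [heig z hz y, hlamconst z hz]
    | zero =>
      simp [hGdef]
    | add a b _ _ pa pb =>
      have hadd : G (a + b) y = G a y + G b y := by
        simp only [hGdef, inner_add_left, ← Finset.sum_add_distrib]
        refine Finset.sum_congr rfl fun α _ => ?_
        push_cast
        ring
      rw [hadd, pa, pb, inner_add_left]
      push_cast
      ring
    | smul r a _ pa =>
      have hsmul : G (r • a) y = (r : ℂ) * G a y := by
        simp only [hGdef, real_inner_smul_left, Finset.mul_sum]
        refine Finset.sum_congr rfl fun α _ => ?_
        push_cast
        ring
      rw [hsmul, pa, real_inner_smul_left]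
      push_cast
      ring
  -- trace computation: n L = 2 ∑ tc
  have htrace : (S.n : ℂ) * L = 2 * ∑ α ∈ S.R0, tc α := by
    let b := stdOrthonormalBasis ℝ V
    have hsum1 : ∑ i, G (b i) (b i) = (Module.finrank ℝ V : ℂ) * L := by
      have : ∀ i, G (b i) (b i) = L := by
        intro i
        rw [hGall, real_inner_self_eq_norm_sq, b.orthonormal.1 i]
        norm_num
      rw [Finset.sum_congr rfl fun i _ => this i]
      simp [Finset.card_univ]
    have hsum2 : ∑ i, G (b i) (b i) = 2 * ∑ α ∈ S.R0, tc α := by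
      simp only [hGdef]
      rw [Finset.sum_comm]
      rw [Finset.mul_sum]
      refine Finset.sum_congr rfl fun α hα => ?_
      have hpar : ∑ i, ⟪(b : OrthonormalBasis _ ℝ V) i, coroot α⟫ * ⟪α, b i⟫ =
          ⟪coroot α, α⟫ := by
        calc ∑ i, ⟪b i, coroot α⟫ * ⟪α, b i⟫
            = ∑ i, ⟪coroot α, b i⟫ * ⟪b i, α⟫ := by
              refine Finset.sum_congr rfl fun i _ => ?_
              rw [real_inner_comm (b i) (coroot α), real_inner_comm α (b i)]
          _ = ⟪coroot α, α⟫ := b.sum_inner_mul_inner (coroot α) α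
      have hca : ⟪coroot α, α⟫ = 2 := by
        rw [real_inner_comm]
        exact coroot_inner_self' (hne hα)
      calc ∑ i, tc α * ((⟪b i, coroot α⟫ : ℝ) : ℂ) * ((⟪α, b i⟫ : ℝ) : ℂ)
          = tc α * ((∑ i, ⟪b i, coroot α⟫ * ⟪α, b i⟫ : ℝ) : ℂ) := by
            push_cast
            rw [Finset.mul_sum]
            refine Finset.sum_congr rfl fun i _ => ?_
            ring
        _ = 2 * tc α := by rw [hpar, hca]; push_cast; ring
    have hdim' : ((Module.finrank ℝ V : ℕ) : ℂ) = (S.n : ℂ) := by rw [S.hdim]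
    rw [← hdim', ← hsum1, hsum2]
  -- split R₀ into positive and negative roots
  set f : V → ℂ := fun α => tc α * ((⟪β, coroot α⟫ : ℝ) : ℂ) * ((⟪α, coroot β⟫ : ℝ) : ℂ)
    with hfdef
  have hfneg : ∀ γ ∈ S.Rpos, f (-γ) = f γ := by
    intro γ hγ
    have hγ0 : γ ∈ S.R0 := S.pos_subset hγ
    simp only [hfdef, coroot_neg', inner_neg_right, inner_neg_left, htcneg γ hγ0]
    push_cast
    ring
  have hsplit : S.R0 = S.Rpos ∪ S.Rpos.image (fun α => -α) := by
    ext α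
    simp only [Finset.mem_union, Finset.mem_image]
    constructor
    · intro hα
      by_cases hp : α ∈ S.Rpos
      · exact Or.inl hp
      · refine Or.inr ⟨-α, ?_, neg_neg α⟩
        by_contra hna
        exact hp ((S.pos_partition α hα).mpr hna)
    · rintro (hp | ⟨γ, hγ, rfl⟩)
      · exact S.pos_subset hp
      · exact hnegmem γ (S.pos_subset hγ)
  have hdisj : Disjoint S.Rpos (S.Rpos.image (fun α => -α)) := by
    rw [Finset.disjoint_left]
    rintro α hα hα2
    obtain ⟨γ, hγ, rfl⟩ := Finset.mem_image.mp hα2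
    exact ((S.pos_partition γ (S.pos_subset hγ)).mp hγ) hα
  have hsum0 : ∑ α ∈ S.R0, f α = 2 * ∑ α ∈ S.Rpos, f α := by
    rw [hsplit, Finset.sum_union hdisj,
      Finset.sum_image (fun a _ b _ h => neg_injective h)]
    rw [Finset.sum_congr rfl fun γ hγ => hfneg γ hγ]
    ring
  -- conclude
  have hGbeta : G β (coroot β) = 2 * L := by
    rw [hGall, coroot_inner_self' (hne hβ)]
    norm_num
  have hGbeta' : G β (coroot β) = ∑ α ∈ S.R0, f α := rfl
  have hfin : (2 : ℂ) * ∑ α ∈ S.Rpos, f α = 2 * L := by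
    rw [← hsum0, ← hGbeta', hGbeta]
  have hL : L = (2 / (S.n : ℂ)) * ∑ α ∈ S.R0, tc α := by
    have hn0 : (S.n : ℂ) ≠ 0 := Nat.cast_ne_zero.mpr S.npos.ne'
    field_simp
    linear_combination htrace
  have hfin2 : ∑ α ∈ S.Rpos, f α = L := mul_left_cancel₀ two_ne_zero hfin
  have hgoal : (∑ α ∈ S.Rpos, tc α * ((⟪β, coroot α⟫ : ℝ) : ℂ) * ((⟪α, coroot β⟫ : ℝ) : ℂ))
      = ∑ α ∈ S.Rpos, f α := rfl
  rw [hgoal, hfin2, hL]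

end AffinePieri
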